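/- arXiv:1603.03753 — 7 statements merged into one kernel-verified Lean document; each statement's English description precedes it below -/
import Mathlib

section
/- Let p be a prime ideal of O_F and (-D, a) a discriminant pair in K = F(√(-D)). Then (-D, p·a) is also a discriminant. Conversely, if p does not divide 2, D ∈ a⁻², and (-D, p·a) is a discriminant, then (-D, a) is a discriminant. -/
/-!
Write `t = tr ω` and `n = N ω`, so that `ω² = tω − n`. Then `O_F ⊕ aω` is an order exactly when
`a ≠ 0`, `ω ∉ F`, `t·a² ⊆ a` and `n·a² ⊆ O_F`. These conditions pass from `a` to `p·a`, so the
same `ω` proves the first implication. Conversely, choose `ℓ ∈ p` with `ℓ ≡ 1 mod 4` (possible as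
`p ∤ 2`) and replace `ω` by `ω + (ℓ² − 1)t/2`: the discriminant is unchanged, the trace becomes
`ℓ²t` and the norm `ℓ⁴n + D(1 − ℓ⁴)/4`. As `ℓ·a ⊆ p·a`, `D·a² ⊆ O_F` and `(1 − ℓ⁴)/4 ∈ O_F`,
these satisfy the conditions for `a`.
-/

open scoped NumberField nonZeroDivisors

/-- `disc(ω) = tr(ω)² − 4·N(ω)` for `ω` in a quadratic extension `K/F`. -/
noncomputable def discEl (F K : Type*) [Field F] [Field K] [Algebra F K] (ω : K) : F :=
  (Algebra.trace F K ω) ^ 2 - 4 * (Algebra.norm F ω)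

/-- The `𝓞 F`-submodule `O_F ⊕ aω` of `K` (as the span of `1` and `a·ω`). -/
noncomputable def pairSubmodule (F K : Type*) [Field F] [NumberField F] [Field K]
    [Algebra F K] (a : FractionalIdeal (𝓞 F)⁰ F) (ω : K) : Submodule (𝓞 F) K :=
  Submodule.span (𝓞 F)
    (insert (1 : K) ((fun b : F => algebraMap F K b * ω) '' (a : Set F)))

/-- An `𝓞 F`-submodule of `K` is an order if it contains `1`, is closed under
multiplication, and spans `K` over `F`. -/
def IsOrderSub (F K : Type*) [Field F] [NumberField F] [Field K] [Algebra F K]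
    (O : Submodule (𝓞 F) K) : Prop :=
  (1 : K) ∈ O ∧ (∀ x ∈ O, ∀ y ∈ O, x * y ∈ O) ∧ Submodule.span F (O : Set K) = ⊤

/-- `(-D, a)` is a discriminant: some `ω` with `disc(ω) = -D` makes `O_F ⊕ aω` an order. -/
def IsDiscPair (F K : Type*) [Field F] [NumberField F] [Field K] [Algebra F K]
    (D : F) (a : FractionalIdeal (𝓞 F)⁰ F) : Prop :=
  ∃ ω : K, discEl F K ω = -D ∧ IsOrderSub F K (pairSubmodule F K a ω)

/-- A field element is totally positive if all real embeddings are positive. -/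
def TotPos (F : Type*) [Field F] (D : F) : Prop := ∀ φ : F →+* ℝ, 0 < φ D

section Quadratic

variable {F K : Type*} [Field F] [Field K] [Algebra F K]

lemma eq_and_eq_of_add_mul_eq_add_mul {ω : K} (hω : ω ∉ Set.range (algebraMap F K))
    {r r' c c' : F}
    (h : algebraMap F K r + algebraMap F K c * ω = algebraMap F K r' + algebraMap F K c' * ω) :
    r = r' ∧ c = c' := by
  by_cases hc : c = c'
  · subst hc
    exact ⟨(algebraMap F K).injective (add_right_cancel h), rfl⟩
  · refine absurd ⟨(r - r') / (c' - c), ?_⟩ hω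
    have hcc : algebraMap F K (c' - c) ≠ 0 :=
      (map_ne_zero _).mpr (sub_ne_zero.mpr (Ne.symm hc))
    rw [map_div₀, div_eq_iff hcc, map_sub, map_sub]
    linear_combination h

lemma linearIndependent_one_of_notMem_range {ω : K} (hω : ω ∉ Set.range (algebraMap F K)) :
    LinearIndependent F ![(1 : K), ω] := by
  refine LinearIndependent.pair_iff.mpr fun s t hst => ?_
  refine eq_and_eq_of_add_mul_eq_add_mul hω ?_
  simpa [Algebra.smul_def] using hst

noncomputable def rescaleTrace (s : F) (ω : K) : K :=
  ω + algebraMap F K ((s - 1) * Algebra.trace F K ω / 2)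

lemma rescaleTrace_notMem_range {ω : K} (hω : ω ∉ Set.range (algebraMap F K)) (s : F) :
    rescaleTrace s ω ∉ Set.range (algebraMap F K) := by
  rintro ⟨z, hz⟩
  exact hω ⟨z - (s - 1) * Algebra.trace F K ω / 2, by
    rw [map_sub, hz, rescaleTrace, add_sub_cancel_right]⟩

variable (hrank : Module.finrank F K = 2)
include hrank

lemma sq_eq_trace_mul_sub_norm (ω : K) :
    ω ^ 2 = algebraMap F K (Algebra.trace F K ω) * ω - algebraMap F K (Algebra.norm F ω) := by
  have : FiniteDimensional F K := .of_finrank_pos (by omega)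
  let b := Module.finBasisOfFinrankEq F K hrank
  have hCH := (Algebra.leftMulMatrix b ω).aeval_self_charpoly
  rw [Matrix.charpoly_fin_two, ← Algebra.trace_eq_matrix_trace, ← Algebra.norm_eq_matrix_det,
    Polynomial.aeval_algHom_apply, ← map_zero (Algebra.leftMulMatrix b)] at hCH
  have := Algebra.leftMulMatrix_injective b hCH
  simp only [map_add, Polynomial.aeval_sub, map_pow, Polynomial.aeval_X, map_mul,
    Polynomial.aeval_C] at this
  linear_combination this

lemma trace_add_algebraMap (ω : K) (x : F) :
    Algebra.trace F K (ω + algebraMap F K x) = Algebra.trace F K ω + 2 * x := by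
  rw [map_add, Algebra.trace_algebraMap, hrank, nsmul_eq_mul, Nat.cast_ofNat]

lemma norm_add_algebraMap (ω : K) (x : F) :
    Algebra.norm F (ω + algebraMap F K x) =
      Algebra.norm F ω + x * Algebra.trace F K ω + x ^ 2 := by
  have : FiniteDimensional F K := .of_finrank_pos (by omega)
  let b := Module.finBasisOfFinrankEq F K hrank
  rw [Algebra.norm_eq_matrix_det b, Algebra.norm_eq_matrix_det b,
    Algebra.trace_eq_matrix_trace b, map_add, AlgHom.commutes, Matrix.det_fin_two,
    Matrix.det_fin_two, Matrix.trace_fin_two]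
  simp only [Matrix.add_apply, Matrix.algebraMap_matrix_apply, ↓reduceIte, Algebra.algebraMap_self,
    RingHom.id_apply, zero_ne_one, add_zero, one_ne_zero]
  ring

lemma trace_rescaleTrace [NeZero (2 : F)] (s : F) (ω : K) :
    Algebra.trace F K (rescaleTrace s ω) = s * Algebra.trace F K ω := by
  rw [rescaleTrace, trace_add_algebraMap hrank]
  field_simp
  ring

lemma norm_rescaleTrace [NeZero (2 : F)] (s : F) (ω : K) :
    Algebra.norm F (rescaleTrace s ω) =
      s ^ 2 * Algebra.norm F ω - (1 - s ^ 2) / 4 * discEl F K ω := by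
  rw [rescaleTrace, norm_add_algebraMap hrank, discEl, show (4 : F) = 2 ^ 2 by norm_num]
  field_simp
  ring

lemma discEl_rescaleTrace (s : F) (ω : K) : discEl F K (rescaleTrace s ω) = discEl F K ω := by
  rw [discEl, discEl, rescaleTrace, trace_add_algebraMap hrank, norm_add_algebraMap hrank]
  ring

end Quadratic

namespace FractionalIdeal

variable {R P : Type*} [CommRing R] {S : Submonoid R} [CommRing P] [Algebra R P]

instance : AddSubgroupClass (FractionalIdeal S P) P where
  add_mem {I} := (I : Submodule R P).add_mem
  zero_mem I := (I : Submodule R P).zero_mem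
  neg_mem {I} := (I : Submodule R P).neg_mem

lemma mul_mem_of_mem_one {x y : P} {I : FractionalIdeal S P} (hx : x ∈ (1 : FractionalIdeal S P))
    (hy : y ∈ I) : x * y ∈ I :=
  one_mul I ▸ mul_mem_mul hx hy

variable [IsLocalization S P]

lemma spanSingleton_mul_mul_le_iff {x : P} {I J L : FractionalIdeal S P} :
    spanSingleton S x * I * J ≤ L ↔ ∀ y ∈ I, ∀ z ∈ J, x * y * z ∈ L := by
  refine ⟨fun h y hy z hz => h (mul_mem_mul (mul_mem_mul (mem_spanSingleton_self S x) hy) hz),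
    fun h => mul_le.mpr fun i hi z hz => ?_⟩
  obtain ⟨y, hy, rfl⟩ := mem_singleton_mul.mp hi
  exact h y hy z hz

lemma spanSingleton_add_le (x y : P) :
    spanSingleton S (x + y) ≤ spanSingleton S x + spanSingleton S y := by
  rw [spanSingleton_le_iff_mem, ← sup_eq_add]
  exact add_mem (le_sup_left (a := spanSingleton S x) (mem_spanSingleton_self S x))
    (le_sup_right (a := spanSingleton S x) (mem_spanSingleton_self S y))

lemma spanSingleton_algebraMap_le_coeIdeal {I : Ideal R} {x : R} (hx : x ∈ I) :
    spanSingleton S (algebraMap R P x) ≤ I :=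
  spanSingleton_le_iff_mem.mpr ((mem_coeIdeal S).mpr ⟨x, hx, rfl⟩)

lemma spanSingleton_algebraMap_le_one (x : R) : spanSingleton S (algebraMap R P x) ≤ 1 :=
  spanSingleton_le_iff_mem.mpr ((mem_one_iff S).mpr ⟨x, rfl⟩)

lemma spanSingleton_mul_mul_le_one_of_mem_inv_mul_inv {A K : Type*} [CommRing A]
    [IsDedekindDomain A] [Field K] [Algebra A K] [IsFractionRing A K] {a : FractionalIdeal A⁰ K}
    {x : K} (hx : x ∈ a⁻¹ * a⁻¹) : spanSingleton A⁰ x * a * a ≤ 1 := by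
  rcases eq_or_ne a 0 with rfl | ha
  · simp
  calc spanSingleton A⁰ x * a * a ≤ a⁻¹ * a⁻¹ * a * a := by
        gcongr; exact spanSingleton_le_iff_mem.mpr hx
    _ = (a⁻¹ * a) * (a⁻¹ * a) := by ring
    _ = 1 := by rw [inv_mul_cancel₀ ha, one_mul]

end FractionalIdeal

open FractionalIdeal

section PairSubmodule

variable {F K : Type*} [Field F] [NumberField F] [Field K] [Algebra F K]
  {a : FractionalIdeal (𝓞 F)⁰ F} {ω : K}

lemma mem_pairSubmodule_iff {x : K} :
    x ∈ pairSubmodule F K a ω ↔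
      ∃ r ∈ (1 : FractionalIdeal (𝓞 F)⁰ F), ∃ c ∈ a,
        x = algebraMap F K r + algebraMap F K c * ω := by
  let f := (LinearMap.toSpanSingleton F K ω).restrictScalars (𝓞 F)
  have hf : (fun b : F => algebraMap F K b * ω) = f := by ext; simp [f, Algebra.smul_def]
  rw [pairSubmodule, Submodule.mem_span_insert, hf]
  have ha : Submodule.span (𝓞 F) (a : Set F) = a := Submodule.span_eq (a : Submodule (𝓞 F) F)
  simp only [Submodule.span_image, ha, Submodule.mem_map, mem_coe, mem_one_iff]
  constructor
  · rintro ⟨r, _, ⟨c, hc, rfl⟩, rfl⟩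
    exact ⟨_, ⟨r, rfl⟩, c, hc, by simp [f, Algebra.smul_def, ← IsScalarTower.algebraMap_apply]⟩
  · rintro ⟨_, ⟨r, rfl⟩, c, hc, rfl⟩
    exact ⟨r, _, ⟨c, hc, rfl⟩, by simp [f, Algebra.smul_def, ← IsScalarTower.algebraMap_apply]⟩

lemma one_mem_pairSubmodule : (1 : K) ∈ pairSubmodule F K a ω :=
  Submodule.subset_span (Set.mem_insert _ _)

lemma algebraMap_mul_mem_pairSubmodule {c : F} (hc : c ∈ a) :
    algebraMap F K c * ω ∈ pairSubmodule F K a ω :=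
  Submodule.subset_span (Set.mem_insert_of_mem _ ⟨c, hc, rfl⟩)

variable (hrank : Module.finrank F K = 2)
include hrank

lemma span_pairSubmodule_eq_top_iff :
    Submodule.span F (pairSubmodule F K a ω : Set K) = ⊤ ↔
      a ≠ 0 ∧ ω ∉ Set.range (algebraMap F K) := by
  refine ⟨fun h => ?_, fun ⟨ha, hω⟩ => ?_⟩
  · rw [← not_or]
    intro hdeg
    have hsub : Submodule.span F (pairSubmodule F K a ω : Set K) ≤
        LinearMap.range (Algebra.linearMap F K) := by
      refine Submodule.span_le.mpr fun x hx => ?_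
      obtain ⟨r, -, c, hc, rfl⟩ := mem_pairSubmodule_iff.mp hx
      rcases hdeg with rfl | ⟨y, rfl⟩
      · exact ⟨r, by simp [(mem_zero_iff _).mp hc]⟩
      · exact ⟨r + c * y, by simp⟩
    have := (Submodule.finrank_mono (h ▸ hsub)).trans (LinearMap.finrank_range_le _)
    rw [finrank_top, hrank, Module.finrank_self] at this
    omega
  · obtain ⟨b, hb, hb0⟩ : ∃ b ∈ a, b ≠ 0 := by
      by_contra! h
      exact ha (eq_zero_iff.mpr h)
    have hω_mem : ω ∈ Submodule.span F (pairSubmodule F K a ω : Set K) := by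
      have := Submodule.smul_mem _ b⁻¹
        (Submodule.subset_span (algebraMap_mul_mem_pairSubmodule (K := K) (ω := ω) hb))
      rwa [Algebra.smul_def, ← mul_assoc, ← map_mul, inv_mul_cancel₀ hb0, map_one,
        one_mul] at this
    rw [eq_top_iff, ← (linearIndependent_one_of_notMem_range hω).span_eq_top_of_card_eq_finrank
      (by simp [hrank]), Submodule.span_le, Set.range_subset_iff, Fin.forall_fin_two]
    exact ⟨Submodule.subset_span one_mem_pairSubmodule, hω_mem⟩

lemma mul_mem_pairSubmodule_iff (hω : ω ∉ Set.range (algebraMap F K)) :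
    (∀ x ∈ pairSubmodule F K a ω, ∀ y ∈ pairSubmodule F K a ω, x * y ∈ pairSubmodule F K a ω) ↔
      spanSingleton _ (Algebra.trace F K ω) * a * a ≤ a ∧
        spanSingleton _ (Algebra.norm F ω) * a * a ≤ 1 := by
  rw [spanSingleton_mul_mul_le_iff, spanSingleton_mul_mul_le_iff]
  have hrel := sq_eq_trace_mul_sub_norm hrank ω
  set t := Algebra.trace F K ω
  set n := Algebra.norm F ω
  constructor
  · intro hmul
    have key : ∀ b ∈ a, ∀ c ∈ a, t * b * c ∈ a ∧ n * b * c ∈ (1 : FractionalIdeal (𝓞 F)⁰ F) := by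
      intro b hb c hc
      obtain ⟨r, hr, c', hc', heq⟩ := mem_pairSubmodule_iff.mp
        (hmul _ (algebraMap_mul_mem_pairSubmodule hb) _ (algebraMap_mul_mem_pairSubmodule hc))
      have heq' : algebraMap F K (-(n * b * c)) + algebraMap F K (t * b * c) * ω =
          algebraMap F K r + algebraMap F K c' * ω := by
        simp only [map_neg, map_mul]
        linear_combination heq - (algebraMap F K b * algebraMap F K c) * hrel
      obtain ⟨hn, ht⟩ := eq_and_eq_of_add_mul_eq_add_mul hω heq'
      exact ⟨ht ▸ hc', neg_neg (n * b * c) ▸ hn ▸ neg_mem hr⟩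
    exact ⟨fun b hb c hc => (key b hb c hc).1, fun b hb c hc => (key b hb c hc).2⟩
  · rintro ⟨ht, hn⟩ x hx y hy
    obtain ⟨r₁, hr₁, c₁, hc₁, rfl⟩ := mem_pairSubmodule_iff.mp hx
    obtain ⟨r₂, hr₂, c₂, hc₂, rfl⟩ := mem_pairSubmodule_iff.mp hy
    refine mem_pairSubmodule_iff.mpr ⟨r₁ * r₂ - n * c₁ * c₂,
      sub_mem (mul_mem_of_mem_one hr₁ hr₂) (hn c₁ hc₁ c₂ hc₂), r₁ * c₂ + r₂ * c₁ + t * c₁ * c₂,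
      add_mem (add_mem (mul_mem_of_mem_one hr₁ hc₂) (mul_mem_of_mem_one hr₂ hc₁))
        (ht c₁ hc₁ c₂ hc₂), ?_⟩
    simp only [map_add, map_mul, map_sub]
    linear_combination (algebraMap F K c₁ * algebraMap F K c₂) * hrel

lemma isOrderSub_pairSubmodule_iff :
    IsOrderSub F K (pairSubmodule F K a ω) ↔
      a ≠ 0 ∧ ω ∉ Set.range (algebraMap F K) ∧
        spanSingleton _ (Algebra.trace F K ω) * a * a ≤ a ∧
          spanSingleton _ (Algebra.norm F ω) * a * a ≤ 1 := by
  rw [IsOrderSub, span_pairSubmodule_eq_top_iff hrank]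
  constructor
  · rintro ⟨-, hmul, ha, hω⟩
    exact ⟨ha, hω, (mul_mem_pairSubmodule_iff hrank hω).mp hmul⟩
  · rintro ⟨ha, hω, hconds⟩
    exact ⟨one_mem_pairSubmodule, (mul_mem_pairSubmodule_iff hrank hω).mpr hconds, ha, hω⟩

end PairSubmodule

lemma Ideal.IsMaximal.isCoprime_span_singleton {R : Type*} [CommRing R] {p : Ideal R}
    (hp : p.IsMaximal) {x : R} (hx : x ∉ p) : IsCoprime p (Ideal.span {x}) := by
  obtain ⟨y, i, hi, h⟩ := hp.exists_inv hx
  exact Ideal.isCoprime_iff_exists.mpr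
    ⟨i, hi, y * x, Ideal.mem_span_singleton'.mpr ⟨y, rfl⟩, by rw [add_comm, h]⟩

lemma Ideal.exists_add_four_mul_eq_one {R : Type*} [CommRing R] {I : Ideal R}
    (hI : IsCoprime I (Ideal.span {2})) : ∃ ℓ ∈ I, ∃ y : R, ℓ + 4 * y = 1 := by
  have h4 := hI.pow_right (n := 2)
  rw [Ideal.span_singleton_pow, Ideal.isCoprime_iff_exists] at h4
  obtain ⟨ℓ, hℓ, _, hj, h⟩ := h4
  obtain ⟨y, rfl⟩ := Ideal.mem_span_singleton'.mp hj
  exact ⟨ℓ, hℓ, y, by linear_combination h⟩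

section Discriminant

variable {F K : Type*} [Field F] [NumberField F] [Field K] [Algebra F K] {D : F}
  {a : FractionalIdeal (𝓞 F)⁰ F} (hrank : Module.finrank F K = 2)
include hrank

lemma isDiscPair_coeIdeal_mul {I : Ideal (𝓞 F)} (hI : I ≠ ⊥) (h : IsDiscPair F K D a) :
    IsDiscPair F K D (↑I * a) := by
  obtain ⟨ω, hdisc, hO⟩ := h
  obtain ⟨ha, hω, ht, hn⟩ := (isOrderSub_pairSubmodule_iff hrank).mp hO
  have hI1 : (I : FractionalIdeal (𝓞 F)⁰ F) ≤ 1 := coeIdeal_le_one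
  refine ⟨ω, hdisc, (isOrderSub_pairSubmodule_iff hrank).mpr
    ⟨mul_ne_zero (coeIdeal_ne_zero.mpr hI) ha, hω, ?_, ?_⟩⟩
  · calc spanSingleton _ (Algebra.trace F K ω) * (↑I * a) * (↑I * a)
        = ↑I * (↑I * (spanSingleton _ (Algebra.trace F K ω) * a * a)) := by ring
      _ ≤ ↑I * (1 * a) := by gcongr
      _ = ↑I * a := by rw [one_mul]
  · calc spanSingleton _ (Algebra.norm F ω) * (↑I * a) * (↑I * a)
        = ↑I * ↑I * (spanSingleton _ (Algebra.norm F ω) * a * a) := by ring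
      _ ≤ 1 * 1 * 1 := by gcongr
      _ = 1 := by rw [one_mul, one_mul]

lemma isOrderSub_pairSubmodule_rescaleTrace {ω : K} {I : Ideal (𝓞 F)} {ℓ y : 𝓞 F}
    (hℓ : ℓ ∈ I) (hℓy : ℓ + 4 * y = 1) (hD : D ∈ a⁻¹ * a⁻¹) (hdisc : discEl F K ω = -D)
    (hO : IsOrderSub F K (pairSubmodule F K (↑I * a) ω)) :
    IsOrderSub F K (pairSubmodule F K a (rescaleTrace (algebraMap (𝓞 F) F (ℓ ^ 2)) ω)) := by
  obtain ⟨hIa, hω, ht, hn⟩ := (isOrderSub_pairSubmodule_iff hrank).mp hO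
  have ha : a ≠ 0 := right_ne_zero_of_mul hIa
  set s := algebraMap (𝓞 F) F (ℓ ^ 2)
  set μ := y * (1 + ℓ) * (1 + ℓ ^ 2)
  have hμ : (1 - s ^ 2) / 4 = algebraMap (𝓞 F) F μ := by
    rw [div_eq_iff (by norm_num : (4 : F) ≠ 0), ← map_ofNat (algebraMap (𝓞 F) F),
      ← map_one (algebraMap (𝓞 F) F), ← map_pow, ← map_sub, ← map_mul]
    exact congrArg _ (by linear_combination -(1 + ℓ) * (1 + ℓ ^ 2) * hℓy)
  refine (isOrderSub_pairSubmodule_iff hrank).mpr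
    ⟨ha, rescaleTrace_notMem_range hω s, ?_, ?_⟩
  · rw [trace_rescaleTrace hrank]
    calc spanSingleton _ (s * Algebra.trace F K ω) * a * a
        = spanSingleton _ (Algebra.trace F K ω) * (spanSingleton _ (algebraMap _ _ ℓ) * a) *
            (spanSingleton _ (algebraMap _ _ ℓ) * a) := by
          simp only [s, map_pow, ← spanSingleton_mul_spanSingleton, ← spanSingleton_pow]; ring
      _ ≤ spanSingleton _ (Algebra.trace F K ω) * (↑I * a) * (↑I * a) := by
          gcongr <;> exact spanSingleton_algebraMap_le_coeIdeal hℓ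
      _ ≤ ↑I * a := ht
      _ ≤ 1 * a := by gcongr; exact coeIdeal_le_one
      _ = a := one_mul a
  · rw [norm_rescaleTrace hrank, hdisc, hμ, mul_neg, sub_neg_eq_add]
    calc spanSingleton _ (s ^ 2 * Algebra.norm F ω + algebraMap _ _ μ * D) * a * a
        ≤ (spanSingleton _ (s ^ 2 * Algebra.norm F ω) + spanSingleton _ (algebraMap _ _ μ * D))
            * a * a := by
          gcongr; exact spanSingleton_add_le _ _
      _ = spanSingleton _ (Algebra.norm F ω) * (spanSingleton _ s * a) * (spanSingleton _ s * a) +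
            spanSingleton _ (algebraMap _ _ μ) * (spanSingleton _ D * a * a) := by
          simp only [← spanSingleton_mul_spanSingleton, ← spanSingleton_pow]; ring
      _ ≤ spanSingleton _ (Algebra.norm F ω) * (↑I * a) * (↑I * a) + 1 * 1 := by
          gcongr
          · exact spanSingleton_algebraMap_le_coeIdeal (I.pow_mem_of_mem hℓ 2 two_pos)
          · exact spanSingleton_algebraMap_le_coeIdeal (I.pow_mem_of_mem hℓ 2 two_pos)
          · exact spanSingleton_algebraMap_le_one μ
          · exact spanSingleton_mul_mul_le_one_of_mem_inv_mul_inv hD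
      _ ≤ 1 + 1 * 1 := by gcongr
      _ = 1 := by rw [one_mul, ← sup_eq_add, sup_idem]

lemma isDiscPair_of_coeIdeal_mul {I : Ideal (𝓞 F)} (hI : IsCoprime I (Ideal.span {2}))
    (hD : D ∈ a⁻¹ * a⁻¹) (h : IsDiscPair F K D (↑I * a)) : IsDiscPair F K D a := by
  obtain ⟨ω, hdisc, hO⟩ := h
  obtain ⟨ℓ, hℓ, y, hℓy⟩ := Ideal.exists_add_four_mul_eq_one hI
  exact ⟨_, (discEl_rescaleTrace hrank _ ω).trans hdisc,
    isOrderSub_pairSubmodule_rescaleTrace hrank hℓ hℓy hD hdisc hO⟩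

end Discriminant

theorem discriminant_pair_mul_prime_general
    (F K : Type*) [Field F] [NumberField F] [Field K] [Algebra F K]
    (D : F)
    (hrank : Module.finrank F K = 2)
    (a : FractionalIdeal (𝓞 F)⁰ F)
    (p : Ideal (𝓞 F)) (hp : p.IsPrime) (hp0 : p ≠ ⊥) :
    (IsDiscPair F K D a →
      IsDiscPair F K D ((p : FractionalIdeal (𝓞 F)⁰ F) * a)) ∧
    ((2 : 𝓞 F) ∉ p → D ∈ (a⁻¹ * a⁻¹ : FractionalIdeal (𝓞 F)⁰ F) →
      IsDiscPair F K D ((p : FractionalIdeal (𝓞 F)⁰ F) * a) →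
      IsDiscPair F K D a) :=
  ⟨isDiscPair_coeIdeal_mul hrank hp0, fun h2p hD =>
    isDiscPair_of_coeIdeal_mul hrank ((hp.isMaximal hp0).isCoprime_span_singleton h2p) hD⟩

/-- If `(-D, a)` is a discriminant then so is `(-D, p·a)`; conversely,
if `p ∤ 2` and `D ∈ a⁻²` and `(-D, p·a)` is a discriminant, then so is `(-D, a)`. -/
theorem discriminant_pair_mul_prime
    (F K : Type*) [Field F] [NumberField F] [Field K] [NumberField K] [Algebra F K]
    (D : F) (hD : TotPos F D)
    (hrank : Module.finrank F K = 2)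
    (hsq : ∃ s : K, s ^ 2 = algebraMap F K (-D))
    (a : FractionalIdeal (𝓞 F)⁰ F)
    (p : Ideal (𝓞 F)) (hp : p.IsPrime) (hp0 : p ≠ ⊥) :
    (IsDiscPair F K D a →
      IsDiscPair F K D ((p : FractionalIdeal (𝓞 F)⁰ F) * a)) ∧
    ((2 : 𝓞 F) ∉ p → D ∈ (a⁻¹ * a⁻¹ : FractionalIdeal (𝓞 F)⁰ F) →
      IsDiscPair F K D ((p : FractionalIdeal (𝓞 F)⁰ F) * a) →
      IsDiscPair F K D a) :=
  discriminant_pair_mul_prime_general F K D hrank a p hp hp0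
end

section
/- In the converse direction of the previous statement: suppose p ∤ 2, D ∈ a⁻², and O_F ⊕ (pa)ω is an order in K with disc(ω) = −D. Choosing ξ ∈ O_F with 1 − 2ξ ∈ p and replacing ω by ω − ξ·tr(ω), one gets tr(ω) ∈ a⁻¹; then from tr(ω)² − 4N(ω) ∈ a⁻², 4N(ω) ∈ a⁻², N(ω) ∈ (pa)⁻² and p ∤ 2 it follows that N(ω) ∈ a⁻², hence O_F ⊕ aω is an order in K. -/
/-!
Since `tr(ω - c) = tr ω - 2c` and `disc(ω - c) = disc ω` for `c ∈ F`, the shift `c = ξ·tr ω` with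
`1 - 2ξ ∈ p` multiplies the trace by an element of `p`, which absorbs the factor `p⁻¹` of
`tr ω ∈ (pa)⁻¹`. The new norm `N' = (ξ² - ξ)·(tr ω)² + N ω` still lies in `(pa)⁻²`, while
`4N' = tr(ω')² + D` lies in `a⁻²`. So the ideal of `s ∈ O_F` with `s·N' ∈ a⁻²` contains `p²` and
`4 ∉ p`, hence is all of `O_F`.
-/

open scoped NumberField nonZeroDivisors

open Module

section QuadraticAlgebra

variable {F K : Type*} [Field F] [CommRing K] [Algebra F K]

lemma Algebra.trace_sub_algebraMap_of_finrank_eq_two (h : finrank F K = 2) (x : K) (c : F) :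
    Algebra.trace F K (x - algebraMap F K c) = Algebra.trace F K x - 2 * c := by
  rw [map_sub, Algebra.trace_algebraMap, h, two_smul, two_mul]

lemma Algebra.norm_sub_algebraMap_of_finrank_eq_two (h : finrank F K = 2) (x : K) (c : F) :
    Algebra.norm F (x - algebraMap F K c) =
      c ^ 2 - Algebra.trace F K x * c + Algebra.norm F x := by
  have : Module.Finite F K := finite_of_finrank_pos (by omega)
  let b := finBasisOfFinrankEq F K h
  simp only [Algebra.norm_eq_matrix_det b, Algebra.trace_eq_matrix_trace b, map_sub,
    AlgHom.commutes, Matrix.det_fin_two, Matrix.trace_fin_two, Matrix.sub_apply,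
    Matrix.algebraMap_matrix_apply, algebraMap_self, RingHom.id_apply, ↓reduceIte,
    zero_ne_one, one_ne_zero, sub_zero]
  ring

end QuadraticAlgebra

lemma discEl_sub_algebraMap {F K : Type*} [Field F] [Field K] [Algebra F K]
    (h : finrank F K = 2) (ω : K) (c : F) :
    discEl F K (ω - algebraMap F K c) = discEl F K ω := by
  rw [discEl, discEl, Algebra.trace_sub_algebraMap_of_finrank_eq_two h,
    Algebra.norm_sub_algebraMap_of_finrank_eq_two h]
  ring

lemma Submodule.mem_of_pow_smul_mem_of_smul_mem {R M : Type*} [CommRing R] [AddCommGroup M]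
    [Module R M] {N : Submodule R M} {p : Ideal R} (hp : p.IsMaximal) {r : R} (hr : r ∉ p)
    (n : ℕ) {x : M} (hpx : ∀ s ∈ p ^ n, s • x ∈ N) (hrx : r • x ∈ N) : x ∈ N := by
  obtain ⟨y, i, hi, hyi⟩ := Ideal.IsMaximal.exists_inv_pow p hr n
  have hx : x = y • r • x + i • x := by rw [smul_smul, ← add_smul, hyi, one_smul]
  rw [hx]
  exact N.add_mem (N.smul_mem y hrx) (hpx i hi)

lemma FractionalIdeal.mul_mem_of_mem_inv_mul {R K : Type*} [CommRing R] [IsDedekindDomain R]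
    [Field K] [Algebra R K] [IsFractionRing R K] {J I : FractionalIdeal R⁰ K} (hJ : J ≠ 0)
    {s x : K} (hs : s ∈ J) (hx : x ∈ J⁻¹ * I) : s * x ∈ I := by
  simpa only [← mul_assoc, mul_inv_cancel₀ hJ, one_mul] using FractionalIdeal.mul_mem_mul hs hx

lemma FractionalIdeal.mem_of_mem_inv_pow_mul_of_smul_mem {R K : Type*} [CommRing R]
    [IsDedekindDomain R] [Field K] [Algebra R K] [IsFractionRing R K] {p : Ideal R}
    (hp : p.IsMaximal) (hp0 : p ≠ ⊥) {r : R} (hr : r ∉ p) {n : ℕ} {I : FractionalIdeal R⁰ K}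
    {x : K} (hx : x ∈ (p : FractionalIdeal R⁰ K)⁻¹ ^ n * I) (hrx : r • x ∈ I) : x ∈ I := by
  refine Submodule.mem_of_pow_smul_mem_of_smul_mem hp hr n (fun s hs => ?_) hrx
  rw [Algebra.smul_def]
  refine mul_mem_of_mem_inv_mul (pow_ne_zero n (coeIdeal_ne_zero.mpr hp0)) ?_ (by rwa [← inv_pow])
  rw [← coeIdeal_pow]
  exact mem_coeIdeal_of_mem _ hs

theorem discriminant_pair_descends_general
    (F K : Type*) [Field F] [NumberField F] [Field K] [Algebra F K]
    (hrank : Module.finrank F K = 2)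
    (D : F) (a : FractionalIdeal (𝓞 F)⁰ F)
    (p : Ideal (𝓞 F)) (hp : p.IsPrime) (hp0 : p ≠ ⊥)
    (hp2 : (2 : 𝓞 F) ∉ p)
    (hDa : D ∈ (a⁻¹ * a⁻¹ : FractionalIdeal (𝓞 F)⁰ F))
    (hcrit : ∀ (b : FractionalIdeal (𝓞 F)⁰ F) (ω0 : K),
      Algebra.trace F K ω0 ∈ (b⁻¹ : FractionalIdeal (𝓞 F)⁰ F) →
      Algebra.norm F ω0 ∈ (b⁻¹ * b⁻¹ : FractionalIdeal (𝓞 F)⁰ F) →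
      IsOrderSub F K (pairSubmodule F K b ω0))
    (ω : K) (hdiscω : discEl F K ω = -D)
    (htr : Algebra.trace F K ω ∈
      (((p : FractionalIdeal (𝓞 F)⁰ F) * a)⁻¹ : FractionalIdeal (𝓞 F)⁰ F))
    (hnm : Algebra.norm F ω ∈
      ((((p : FractionalIdeal (𝓞 F)⁰ F) * a)⁻¹) * (((p : FractionalIdeal (𝓞 F)⁰ F) * a)⁻¹)
        : FractionalIdeal (𝓞 F)⁰ F)) :
    ∃ ξ : 𝓞 F, (1 - 2 * ξ) ∈ p ∧
      (let ω' : K := ω - algebraMap F K (algebraMap (𝓞 F) F ξ * Algebra.trace F K ω)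
       discEl F K ω' = -D ∧
       Algebra.trace F K ω' ∈ (a⁻¹ : FractionalIdeal (𝓞 F)⁰ F) ∧
       Algebra.norm F ω' ∈ (a⁻¹ * a⁻¹ : FractionalIdeal (𝓞 F)⁰ F) ∧
       IsOrderSub F K (pairSubmodule F K a ω')) := by
  have hpmax : p.IsMaximal := hp.isMaximal hp0
  obtain ⟨ξ, i, hi, hξi⟩ := hpmax.exists_inv hp2
  have hξ : 1 - 2 * ξ ∈ p := by rwa [show 1 - 2 * ξ = i by linear_combination -hξi]
  refine ⟨ξ, hξ, ?_⟩
  intro ω'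
  set P : FractionalIdeal (𝓞 F)⁰ F := ↑p
  set t := Algebra.trace F K ω
  have hpa : (P * a)⁻¹ * (P * a)⁻¹ = P⁻¹ ^ 2 * (a⁻¹ * a⁻¹) := by rw [mul_inv]; ring
  have hdisc : discEl F K ω' = -D := (discEl_sub_algebraMap hrank ω _).trans hdiscω
  have htr' : Algebra.trace F K ω' = algebraMap (𝓞 F) F (1 - 2 * ξ) * t := by
    rw [Algebra.trace_sub_algebraMap_of_finrank_eq_two hrank]
    simp only [map_sub, map_mul, map_one, map_ofNat]
    ring
  have hnm' : Algebra.norm F ω' = (ξ ^ 2 - ξ) • (t * t) + Algebra.norm F ω := by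
    rw [Algebra.norm_sub_algebraMap_of_finrank_eq_two hrank, Algebra.smul_def]
    simp only [map_sub, map_pow]
    ring
  have htr_mem : Algebra.trace F K ω' ∈ a⁻¹ := by
    rw [htr']
    refine FractionalIdeal.mul_mem_of_mem_inv_mul (FractionalIdeal.coeIdeal_ne_zero.mpr hp0)
      (FractionalIdeal.mem_coeIdeal_of_mem _ hξ) ?_
    rwa [← mul_inv]
  have hnm_mem_pa : Algebra.norm F ω' ∈ P⁻¹ ^ 2 * (a⁻¹ * a⁻¹) := by
    rw [← hpa, hnm', ← FractionalIdeal.mem_coe]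
    exact add_mem (Submodule.smul_mem _ _ (FractionalIdeal.mul_mem_mul htr htr)) hnm
  have h4nm : (4 : 𝓞 F) • Algebra.norm F ω' ∈ a⁻¹ * a⁻¹ := by
    have h4 : (4 : 𝓞 F) • Algebra.norm F ω' =
        Algebra.trace F K ω' * Algebra.trace F K ω' + D := by
      rw [Algebra.smul_def, map_ofNat]
      unfold discEl at hdisc
      linear_combination (-1 : F) * hdisc
    rw [h4, ← FractionalIdeal.mem_coe]
    exact add_mem (FractionalIdeal.mul_mem_mul htr_mem htr_mem) hDa
  have h4p : (4 : 𝓞 F) ∉ p := by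
    rw [show (4 : 𝓞 F) = 2 ^ 2 by norm_num, hp.pow_mem_iff_mem 2 two_pos]
    exact hp2
  have hnm_mem : Algebra.norm F ω' ∈ a⁻¹ * a⁻¹ :=
    FractionalIdeal.mem_of_mem_inv_pow_mul_of_smul_mem hpmax hp0 h4p hnm_mem_pa h4nm
  exact ⟨hdisc, htr_mem, hnm_mem, hcrit a ω' htr_mem hnm_mem⟩

/-- Detailed converse direction: if `p ∤ 2`, `D ∈ a⁻²` and
`O_F ⊕ (pa)ω` is an order with `disc(ω) = −D` (so that `tr(ω) ∈ (pa)⁻¹` and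
`N(ω) ∈ (pa)⁻²`), then choosing `ξ ∈ O_F` with `1 − 2ξ ∈ p` and replacing `ω` by
`ω − ξ·tr(ω)` one obtains `tr ∈ a⁻¹`, `N ∈ a⁻²`, hence `O_F ⊕ aω'` is an order.
The sufficiency criterion "`tr ∈ b⁻¹` and `N ∈ b⁻²` imply `O_F ⊕ bω` is an order"
is supplied as the hypothesis `hcrit`. -/
theorem discriminant_pair_descends
    (F K : Type*) [Field F] [NumberField F] [Field K] [NumberField K] [Algebra F K]
    (hrank : Module.finrank F K = 2)
    (D : F) (a : FractionalIdeal (𝓞 F)⁰ F)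
    (p : Ideal (𝓞 F)) (hp : p.IsPrime) (hp0 : p ≠ ⊥)
    (hp2 : (2 : 𝓞 F) ∉ p)
    (hDa : D ∈ (a⁻¹ * a⁻¹ : FractionalIdeal (𝓞 F)⁰ F))
    (hcrit : ∀ (b : FractionalIdeal (𝓞 F)⁰ F) (ω0 : K),
      Algebra.trace F K ω0 ∈ (b⁻¹ : FractionalIdeal (𝓞 F)⁰ F) →
      Algebra.norm F ω0 ∈ (b⁻¹ * b⁻¹ : FractionalIdeal (𝓞 F)⁰ F) →
      IsOrderSub F K (pairSubmodule F K b ω0))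
    (ω : K) (hdiscω : discEl F K ω = -D)
    (hord : IsOrderSub F K
      (pairSubmodule F K ((p : FractionalIdeal (𝓞 F)⁰ F) * a) ω))
    (htr : Algebra.trace F K ω ∈
      (((p : FractionalIdeal (𝓞 F)⁰ F) * a)⁻¹ : FractionalIdeal (𝓞 F)⁰ F))
    (hnm : Algebra.norm F ω ∈
      ((((p : FractionalIdeal (𝓞 F)⁰ F) * a)⁻¹) * (((p : FractionalIdeal (𝓞 F)⁰ F) * a)⁻¹)
        : FractionalIdeal (𝓞 F)⁰ F)) :
    ∃ ξ : 𝓞 F, (1 - 2 * ξ) ∈ p ∧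
      (let ω' : K := ω - algebraMap F K (algebraMap (𝓞 F) F ξ * Algebra.trace F K ω)
       discEl F K ω' = -D ∧
       Algebra.trace F K ω' ∈ (a⁻¹ : FractionalIdeal (𝓞 F)⁰ F) ∧
       Algebra.norm F ω' ∈ (a⁻¹ * a⁻¹ : FractionalIdeal (𝓞 F)⁰ F) ∧
       IsOrderSub F K (pairSubmodule F K a ω')) :=
  discriminant_pair_descends_general F K hrank D a p hp hp0 hp2 hDa hcrit ω hdiscω htr hnm
end

section
/- Let B be a totally definite quaternion algebra over a totally real field F, R an order in B, and for x, y in the finite idele group of B^× let Γ_{x,y} = (B^× ∩ x⁻¹ R̂^× y)/O_F^× and Γ'_{x,y} = (B^× ∩ x⁻¹ F̂^× R̂^× y)/F^×. Then the natural map Γ_{x,y} → Γ'_{x,y} is injective, and Γ'_{x,y} decomposes as the disjoint union over ξ ∈ cl(F) of Γ_{ξx,y}. -/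
open scoped Classical

/- Abstract adelic framework: `G` plays the role of `B̂^×`, `Bx` the image of `B^×`,
`U` the compact open subgroup `R̂^×`, `Fh` the central subgroup `F̂^×`.  Then
`F^× = Bx ⊓ Fh`, `O_F^× = Bx ⊓ U` and `Ô_F^× = Fh ⊓ U`. -/

variable {G : Type*} [Group G]

/-- The set `Γ_{x,y} = B^× ∩ x⁻¹ R̂^× y` (before dividing by `O_F^×`). -/
def gammaSet (Bx U : Subgroup G) (x y : G) : Set G :=
  {γ | γ ∈ Bx ∧ ∃ u ∈ U, γ = x⁻¹ * u * y}

/-- The set `Γ'_{x,y} = B^× ∩ x⁻¹ F̂^× R̂^× y` (before dividing by `F^×`). -/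
def gamma'Set (Bx Fh U : Subgroup G) (x y : G) : Set G :=
  {γ | γ ∈ Bx ∧ ∃ f ∈ Fh, ∃ u ∈ U, γ = x⁻¹ * f * u * y}

/-- The left `OF`-orbit of `γ`. -/
def leftOrbit (OF : Subgroup G) (γ : G) : Set G := {δ | ∃ ε ∈ OF, δ = ε * γ}

/-- `Γ_{x,y}` as a set of `O_F^×`-orbits, i.e. `(B^× ∩ x⁻¹R̂^×y)/O_F^×`. -/
def Gamma (Bx U OF : Subgroup G) (x y : G) : Set (Set G) :=
  {s | ∃ γ ∈ gammaSet Bx U x y, s = leftOrbit OF γ}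

/-- The common value of `v·γ` on an orbit `s` (via a choice of representative). -/
noncomputable def orbitVal {V : Type*} [AddCommMonoid V]
    (act : V → G → V) (v : V) (s : Set G) : V :=
  if h : s.Nonempty then act v h.some else 0

/-- The quaternionic modular form `φ_{x,v}`, with `φ_{x,v}(y) = Σ_{γ ∈ Γ_{x,y}} v·γ`. -/
noncomputable def phiForm {V : Type*} [AddCommMonoid V]
    (Bx U OF : Subgroup G) (act : V → G → V) (x : G) (v : V) (y : G) : V :=
  ∑ᶠ s ∈ Gamma Bx U OF x y, orbitVal act v s

/-- The double coset `R̂^× x B^×`. -/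
def doubleCoset (U Bx : Subgroup G) (x : G) : Set G :=
  {g | ∃ u ∈ U, ∃ b ∈ Bx, g = u * x * b}

/-- The class set `cl(R) = R̂^×\B̂^×/B^×`, realized as the set of double cosets. -/
def classSet (U Bx : Subgroup G) : Set (Set G) :=
  {s | ∃ x : G, s = doubleCoset U Bx x}

/-- The weight `w_x = |Γ_x| = |Γ_{x,x}|`. -/
noncomputable def weight (Bx U OF : Subgroup G) (x : G) : ℕ :=
  Nat.card (Gamma Bx U OF x x)

/-- The height pairing `⟨φ,ψ⟩ = Σ_{x ∈ cl(R)} (1/w_x)⟨φ(x),ψ(x)⟩`. -/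
noncomputable def heightPairing {V : Type*} [NormedAddCommGroup V] [InnerProductSpace ℂ V]
    (Bx U OF : Subgroup G) (φ ψ : G → V) : ℂ :=
  ∑ᶠ s ∈ classSet U Bx,
    if h : s.Nonempty then
      (weight Bx U OF h.some : ℂ)⁻¹ * (inner ℂ (φ h.some) (ψ h.some) : ℂ)
    else 0

/-! Everything rests on one computation: if `f · (ξx)⁻¹ u y = (ζx)⁻¹ u' y` with `u, u' ∈ R̂^×`
and `ξ, f` central, then `u' u⁻¹ = ξ⁻¹ ζ f`, so `ξ⁻¹ ζ f ∈ F̂^× ∩ R̂^× = Ô_F^×`. With `ξ = ζ = 1`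
this makes an `F^×`-equivalence inside `Γ_{x,y}` an `O_F^×`-equivalence; in general it says that
`ξ` and `ζ` agree in `cl(F)`. The covering is just `x⁻¹ f = (f⁻¹ x)⁻¹`. -/

theorem mul_inv_eq_of_mul_eq {a b f u u' y : G} (h : f * (a⁻¹ * u * y) = b⁻¹ * u' * y) :
    u' * u⁻¹ = b * f * a⁻¹ := by
  have h' : f * a⁻¹ * u = b⁻¹ * u' := mul_right_cancel (by simpa only [mul_assoc] using h)
  have hu' : u' = b * (f * a⁻¹ * u) := by rw [h', mul_inv_cancel_left]
  rw [hu']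
  group

theorem inv_mul_mul_mem_of_mul_mem_gammaSet {Bx Fh U : Subgroup G}
    (hcent : ∀ f ∈ Fh, ∀ g : G, f * g = g * f) {x y ξ ζ f γ : G}
    (hξ : ξ ∈ Fh) (hf : f ∈ Fh)
    (hγ : γ ∈ gammaSet Bx U (ξ * x) y) (hfγ : f * γ ∈ gammaSet Bx U (ζ * x) y) :
    ξ⁻¹ * ζ * f ∈ U := by
  obtain ⟨-, u, hu, rfl⟩ := hγ
  obtain ⟨-, u', hu', hfγ⟩ := hfγ
  have hratio : u' * u⁻¹ = ξ⁻¹ * ζ * f :=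
    calc u' * u⁻¹ = ζ * x * f * (ξ * x)⁻¹ := mul_inv_eq_of_mul_eq hfγ
      _ = ζ * (x * f * x⁻¹) * ξ⁻¹ := by group
      _ = ζ * f * ξ⁻¹ := by rw [← hcent f hf x, mul_inv_cancel_right]
      _ = ξ⁻¹ * ζ * f := by rw [← hcent ξ⁻¹ (Fh.inv_mem hξ), mul_assoc]
  exact hratio ▸ U.mul_mem hu' (U.inv_mem hu)

theorem gamma'Set_eq_iUnion_gammaSet (Bx Fh U : Subgroup G) (x y : G) :
    gamma'Set Bx Fh U x y = ⋃ ξ ∈ (Fh : Set G), gammaSet Bx U (ξ * x) y := by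
  ext γ
  simp only [gamma'Set, gammaSet, Set.mem_ofPred_eq, Set.mem_iUnion, SetLike.mem_coe,
    exists_prop]
  constructor
  · rintro ⟨hγ, f, hf, u, hu, rfl⟩
    exact ⟨f⁻¹, Fh.inv_mem hf, hγ, u, hu, by group⟩
  · rintro ⟨ξ, hξ, hγ, u, hu, rfl⟩
    exact ⟨hγ, ξ⁻¹, Fh.inv_mem hξ, u, hu, by group⟩

/-- The first conjunct is injectivity of `Γ_{x,y} → Γ'_{x,y}` on orbits; the third encodes the
disjointness over `cl(F) = F̂^×/(Ô_F^× F^×)`: `Γ_{ξx,y}` and `Γ_{ζx,y}` meet modulo `F^×` only if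
`ξ` and `ζ` agree in `cl(F)`. -/
theorem gamma'_decomposition
    (Bx Fh U : Subgroup G)
    (hcent : ∀ f ∈ Fh, ∀ g : G, f * g = g * f)
    (x y : G) :
    (∀ γ ∈ gammaSet Bx U x y, ∀ δ ∈ gammaSet Bx U x y,
      (∃ f ∈ Bx ⊓ Fh, γ = f * δ) → ∃ ε ∈ Bx ⊓ U, γ = ε * δ) ∧
    (gamma'Set Bx Fh U x y = ⋃ ξ ∈ (Fh : Set G), gammaSet Bx U (ξ * x) y) ∧
    (∀ ξ ∈ Fh, ∀ ζ ∈ Fh, ∀ γ ∈ gammaSet Bx U (ξ * x) y, ∀ f ∈ Bx ⊓ Fh,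
      f * γ ∈ gammaSet Bx U (ζ * x) y →
      ∃ e ∈ Fh ⊓ U, ∃ h ∈ Bx ⊓ Fh, ζ = ξ * e * h) := by
  refine ⟨?_, gamma'Set_eq_iUnion_gammaSet Bx Fh U x y, ?_⟩
  · rintro γ hγ δ hδ ⟨f, ⟨hfB, hfF⟩, rfl⟩
    rw [← one_mul x] at hγ hδ
    have hfU := inv_mul_mul_mem_of_mul_mem_gammaSet hcent Fh.one_mem hfF hδ hγ
    exact ⟨f, ⟨hfB, by simpa using hfU⟩, rfl⟩
  · rintro ξ hξ ζ hζ γ hγ f ⟨hfB, hfF⟩ hfγ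
    refine ⟨ξ⁻¹ * ζ * f, ⟨?_, inv_mul_mul_mem_of_mul_mem_gammaSet hcent hξ hfF hγ hfγ⟩,
      f⁻¹, ⟨Bx.inv_mem hfB, Fh.inv_mem hfF⟩, by group⟩
    exact Fh.mul_mem (Fh.mul_mem (Fh.inv_mem hξ) hζ) hfF
end

section
/- Let (V, ρ) be a unitary right representation of B^×/F^× and R an order in the totally definite quaternion algebra B. For x ∈ B̂^× and v ∈ V, define φ_{x,v}(y) = Σ_{γ ∈ Γ_{x,y}} v·γ, where Γ_{x,y} = (B^× ∩ x⁻¹R̂^×y)/O_F^×. Then for the height pairing ⟨φ,ψ⟩ = Σ_{x ∈ cl(R)} (1/w_x)⟨φ(x), ψ(x)⟩, one has ⟨φ_{x,v}, φ_{y,w}⟩ = Σ_{γ ∈ Γ_{x,y}} ⟨v·γ, w⟩. -/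
open scoped Classical

/- Abstract adelic framework: `G` plays the role of `B̂^×`, `Bx` the image of `B^×`,
`U` the compact open subgroup `R̂^×`, `Fh` the central subgroup `F̂^×`.  Then
`F^× = Bx ⊓ Fh`, `O_F^× = Bx ⊓ U` and `Ô_F^× = Fh ⊓ U`. -/

variable {G : Type*} [Group G]

/-!
Only the class of `y` contributes, since `φ_{y,w}` is supported on `R̂^× y B^×`. For a
representative `z` of that class and `δ ∈ Γ_{y,z}`, right multiplication by `δ` is a bijection
`Γ_{x,y} → Γ_{x,z}`, so by unitarity every one of the `|Γ_{y,z}|` terms of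
`⟨φ_{x,v}(z), φ_{y,w}(z)⟩ = Σ_{δ ∈ Γ_{y,z}} ⟨φ_{x,v}(z), w·δ⟩` equals `Σ_{γ ∈ Γ_{x,y}} ⟨v·γ, w⟩`.
Finally `|Γ_{y,z}| = |Γ_{z,y}| = |Γ_{z,z}| = w_z` (inversion, then the same bijection), which
cancels the weight `1/w_z`.
-/

open scoped Pointwise

section Finsum

variable {α : Type*}

theorem finsum_mem_eq_single {M : Type*} [AddCommMonoid M] {f : α → M} {s : Set α} {a : α}
    (ha : a ∈ s) (h : ∀ x ∈ s, x ≠ a → f x = 0) : ∑ᶠ x ∈ s, f x = f a := by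
  rw [finsum_eq_single (fun x => ∑ᶠ _ : x ∈ s, f x) a fun x hx => by simp +contextual [h x _ hx]]
  simp [ha]

theorem Set.Finite.finsum_mem_const {M : Type*} [AddCommMonoid M] {s : Set α} (hs : s.Finite)
    (c : M) : ∑ᶠ _ ∈ s, c = s.ncard • c := by
  rw [← hs.coe_toFinset, finsum_mem_coe_finset, Finset.sum_const, Set.ncard_coe_finset]

section InnerProductSpace

variable {V : Type*} [NormedAddCommGroup V] [InnerProductSpace ℂ V] {s : Set α}

theorem Set.Finite.finsum_mem_inner (hs : s.Finite) (f : α → V) (w : V) :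
    inner ℂ (∑ᶠ i ∈ s, f i) w = ∑ᶠ i ∈ s, inner ℂ (f i) w := by
  rw [← hs.coe_toFinset, finsum_mem_coe_finset, finsum_mem_coe_finset, sum_inner]

theorem Set.Finite.inner_finsum_mem (hs : s.Finite) (f : α → V) (v : V) :
    inner ℂ v (∑ᶠ i ∈ s, f i) = ∑ᶠ i ∈ s, inner ℂ v (f i) := by
  rw [← hs.coe_toFinset, finsum_mem_coe_finset, finsum_mem_coe_finset, inner_sum]

end InnerProductSpace

end Finsum

section Gamma

variable {Bx U OF : Subgroup G}

theorem doubleCoset_eq_doubleCoset (x : G) :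
    doubleCoset U Bx x = DoubleCoset.doubleCoset x U Bx := by
  ext g
  rw [DoubleCoset.mem_doubleCoset]
  rfl

theorem mem_doubleCoset_self (x : G) : x ∈ doubleCoset U Bx x :=
  ⟨1, one_mem U, 1, one_mem Bx, by group⟩

theorem doubleCoset_eq_of_mem {x z : G} (h : z ∈ doubleCoset U Bx x) :
    doubleCoset U Bx z = doubleCoset U Bx x := by
  rw [doubleCoset_eq_doubleCoset] at h ⊢
  rw [doubleCoset_eq_doubleCoset, DoubleCoset.doubleCoset_eq_of_mem h]

theorem mem_doubleCoset_iff_gammaSet_nonempty {y z : G} :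
    z ∈ doubleCoset U Bx y ↔ (gammaSet Bx U y z).Nonempty := by
  constructor
  · rintro ⟨u, hu, b, hb, rfl⟩
    exact ⟨b, hb, u⁻¹, inv_mem hu, by group⟩
  · rintro ⟨b, hb, u, hu, rfl⟩
    exact ⟨u⁻¹, inv_mem hu, y⁻¹ * u * z, hb, by group⟩

theorem Gamma_eq_image (x y : G) : Gamma Bx U OF x y = leftOrbit OF '' gammaSet Bx U x y := by
  ext s
  exact exists_congr fun γ => and_congr_right fun _ => eq_comm

theorem gammaSet_eq_image_mul_right {x y z δ : G} (hδ : δ ∈ gammaSet Bx U y z) :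
    gammaSet Bx U x z = (· * δ) '' gammaSet Bx U x y := by
  obtain ⟨hδB, u', hu', rfl⟩ := hδ
  ext γ
  constructor
  · rintro ⟨hγ, u, hu, rfl⟩
    refine ⟨x⁻¹ * (u * u'⁻¹) * y, ⟨?_, u * u'⁻¹, mul_mem hu (inv_mem hu'), rfl⟩, by group⟩
    convert mul_mem hγ (inv_mem hδB) using 1
    group
  · rintro ⟨β, ⟨hβ, u, hu, rfl⟩, rfl⟩
    exact ⟨mul_mem hβ hδB, u * u', mul_mem hu hu', by group⟩

theorem gammaSet_swap (x y : G) : gammaSet Bx U y x = (gammaSet Bx U x y)⁻¹ := by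
  ext γ
  constructor
  · rintro ⟨hγ, u, hu, rfl⟩
    exact ⟨inv_mem hγ, u⁻¹, inv_mem hu, by group⟩
  · rintro ⟨hγ, u, hu, h⟩
    exact ⟨inv_mem_iff.mp hγ, u⁻¹, inv_mem hu, by rw [← inv_inv γ, h]; group⟩

theorem leftOrbit_mul_right (γ δ : G) : leftOrbit OF (γ * δ) = (· * δ) '' leftOrbit OF γ := by
  ext g
  constructor
  · rintro ⟨ε, hε, rfl⟩
    exact ⟨ε * γ, ⟨ε, hε, rfl⟩, mul_assoc _ _ _⟩
  · rintro ⟨_, ⟨ε, hε, rfl⟩, rfl⟩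
    exact ⟨ε, hε, mul_assoc _ _ _⟩

theorem inv_leftOrbit (hcent : ∀ ε ∈ OF, ∀ g : G, ε * g = g * ε) (γ : G) :
    (leftOrbit OF γ)⁻¹ = leftOrbit OF γ⁻¹ := by
  ext g
  constructor
  · rintro ⟨ε, hε, h⟩
    refine ⟨ε⁻¹, inv_mem hε, ?_⟩
    rw [← inv_inv g, h, mul_inv_rev, hcent _ (inv_mem hε)]
  · rintro ⟨ε, hε, rfl⟩
    refine ⟨ε⁻¹, inv_mem hε, ?_⟩
    rw [mul_inv_rev, inv_inv, hcent _ (inv_mem hε)]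

theorem Gamma_eq_image_mul_right {x y z δ : G} (hδ : δ ∈ gammaSet Bx U y z) :
    Gamma Bx U OF x z = Set.image (· * δ) '' Gamma Bx U OF x y := by
  simp only [Gamma_eq_image, gammaSet_eq_image_mul_right hδ, Set.image_image,
    leftOrbit_mul_right]

theorem Gamma_swap (hcent : ∀ ε ∈ OF, ∀ g : G, ε * g = g * ε) (x y : G) :
    Gamma Bx U OF y x = (Gamma Bx U OF x y)⁻¹ := by
  rw [Gamma_eq_image, Gamma_eq_image, gammaSet_swap]
  exact Set.image_inv_of_apply_inv_eq_inv fun γ _ => (inv_leftOrbit hcent γ).symm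

theorem weight_eq_ncard_Gamma (hcent : ∀ ε ∈ OF, ∀ g : G, ε * g = g * ε) {y z δ : G}
    (hδ : δ ∈ gammaSet Bx U y z) : weight Bx U OF z = (Gamma Bx U OF y z).ncard := by
  rw [weight, Nat.card_coe_set_eq, Gamma_eq_image_mul_right hδ,
    Set.ncard_image_of_injective _ (Set.image_injective.mpr (mul_left_injective δ)),
    Gamma_swap hcent, Set.ncard_inv]

theorem weight_ne_zero {z : G} (hfin : (Gamma Bx U OF z z).Finite) : weight Bx U OF z ≠ 0 := by
  rw [weight, Nat.card_coe_set_eq]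
  exact (Set.ncard_pos hfin).mpr ⟨_, 1, ⟨one_mem Bx, 1, one_mem U, by group⟩, rfl⟩ |>.ne'

end Gamma

section Action

variable {V : Type*} {OF : Subgroup G} {act : V → G → V}

theorem orbitVal_leftOrbit [AddCommMonoid V]
    (hmul : ∀ (v : V) (g h : G), act v (g * h) = act (act v g) h)
    (htriv : ∀ (v : V), ∀ ε ∈ OF, act v ε = v)
    (hcent : ∀ ε ∈ OF, ∀ g : G, ε * g = g * ε) (v : V) (γ : G) :
    orbitVal act v (leftOrbit OF γ) = act v γ := by
  have hne : (leftOrbit OF γ).Nonempty := ⟨γ, 1, one_mem OF, (one_mul γ).symm⟩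
  obtain ⟨ε, hε, hγ⟩ := hne.some_mem
  rw [orbitVal, dif_pos hne, hγ, hcent ε hε, hmul, htriv _ ε hε]

theorem phiForm_eq_zero_of_notMem_doubleCoset [AddCommMonoid V] {Bx U : Subgroup G} {x y : G}
    (h : y ∉ doubleCoset U Bx x) (v : V) : phiForm Bx U OF act x v y = 0 := by
  rw [mem_doubleCoset_iff_gammaSet_nonempty, Set.not_nonempty_iff_eq_empty] at h
  rw [phiForm, Gamma_eq_image, h, Set.image_empty, finsum_mem_empty]

variable [NormedAddCommGroup V] [InnerProductSpace ℂ V] {Bx U : Subgroup G}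
  (hmul : ∀ (v : V) (g h : G), act v (g * h) = act (act v g) h)
  (hunit : ∀ (v w : V) (g : G), g ∈ Bx →
    (inner ℂ (act v g) (act w g) : ℂ) = (inner ℂ v w : ℂ))
  (htriv : ∀ (v : V), ∀ ε ∈ OF, act v ε = v)
  (hcent : ∀ ε ∈ OF, ∀ g : G, ε * g = g * ε)
include hmul hunit htriv hcent

theorem inner_phiForm_act {x y z δ : G} (hδ : δ ∈ gammaSet Bx U y z)
    (hfin : (Gamma Bx U OF x y).Finite) (v w : V) :
    inner ℂ (phiForm Bx U OF act x v z) (act w δ)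
      = ∑ᶠ r ∈ Gamma Bx U OF x y, (inner ℂ (orbitVal act v r) w : ℂ) := by
  rw [phiForm, Gamma_eq_image_mul_right hδ,
    finsum_mem_image (Set.image_injective.mpr (mul_left_injective δ)).injOn,
    hfin.finsum_mem_inner]
  refine finsum_mem_congr rfl fun r hr => ?_
  obtain ⟨β, -, rfl⟩ := hr
  rw [← leftOrbit_mul_right, orbitVal_leftOrbit hmul htriv hcent,
    orbitVal_leftOrbit hmul htriv hcent, hmul, hunit _ _ _ hδ.1]

theorem inner_phiForm_phiForm_of_mem_doubleCoset
    (hfin : ∀ x y : G, (Gamma Bx U OF x y).Finite) {x y z : G} (hz : z ∈ doubleCoset U Bx y)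
    (v w : V) :
    inner ℂ (phiForm Bx U OF act x v z) (phiForm Bx U OF act y w z)
      = weight Bx U OF z * ∑ᶠ r ∈ Gamma Bx U OF x y, (inner ℂ (orbitVal act v r) w : ℂ) := by
  obtain ⟨δ, hδ⟩ := mem_doubleCoset_iff_gammaSet_nonempty.mp hz
  nth_rw 2 [phiForm]
  rw [(hfin y z).inner_finsum_mem, weight_eq_ncard_Gamma hcent hδ, ← nsmul_eq_mul,
    ← (hfin y z).finsum_mem_const]
  refine finsum_mem_congr rfl fun t ht => ?_
  obtain ⟨δ', hδ', rfl⟩ := ht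
  rw [orbitVal_leftOrbit hmul htriv hcent, inner_phiForm_act hmul hunit htriv hcent hδ' (hfin x y)]

end Action

theorem heightPairing_phiForm_phiForm_general {V : Type*}
    [NormedAddCommGroup V] [InnerProductSpace ℂ V]
    (Bx U OF : Subgroup G)
    (act : V → G → V)
    (hmul : ∀ (v : V) (g h : G), act v (g * h) = act (act v g) h)
    (hunit : ∀ (v w : V) (g : G), g ∈ Bx →
      (inner ℂ (act v g) (act w g) : ℂ) = (inner ℂ v w : ℂ))
    (htriv : ∀ (v : V), ∀ ε ∈ OF, act v ε = v)
    (hcent : ∀ ε ∈ OF, ∀ g : G, ε * g = g * ε)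
    (hfin : ∀ x y : G, (Gamma Bx U OF x y).Finite)
    (x y : G) (v w : V) :
    heightPairing Bx U OF (phiForm Bx U OF act x v) (phiForm Bx U OF act y w)
      = ∑ᶠ s ∈ Gamma Bx U OF x y, (inner ℂ (orbitVal act v s) w : ℂ) := by
  have hy : (doubleCoset U Bx y).Nonempty := ⟨y, mem_doubleCoset_self y⟩
  rw [heightPairing]
  refine (finsum_mem_eq_single (s := classSet U Bx) ⟨y, rfl⟩ ?_).trans ?_
  · rintro _ ⟨x', rfl⟩ hne
    have hx' : (doubleCoset U Bx x').Nonempty := ⟨x', mem_doubleCoset_self x'⟩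
    have hsome : hx'.some ∉ doubleCoset U Bx y := fun h =>
      hne (by rw [← doubleCoset_eq_of_mem hx'.some_mem, doubleCoset_eq_of_mem h])
    rw [dif_pos hx', phiForm_eq_zero_of_notMem_doubleCoset hsome, inner_zero_right, mul_zero]
  · rw [dif_pos hy, inner_phiForm_phiForm_of_mem_doubleCoset hmul hunit htriv hcent hfin
      hy.some_mem, inv_mul_cancel_left₀ (Nat.cast_ne_zero.mpr (weight_ne_zero (hfin _ _)))]

/-- `⟨φ_{x,v}, φ_{y,w}⟩ = Σ_{γ ∈ Γ_{x,y}} ⟨v·γ, w⟩`. -/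
theorem heightPairing_phiForm_phiForm {V : Type*}
    [NormedAddCommGroup V] [InnerProductSpace ℂ V]
    (Bx U OF : Subgroup G)
    (act : V → G → V)
    (hone : ∀ v : V, act v 1 = v)
    (hmul : ∀ (v : V) (g h : G), act v (g * h) = act (act v g) h)
    (hadd : ∀ (v w : V) (g : G), act (v + w) g = act v g + act w g)
    (hunit : ∀ (v w : V) (g : G), g ∈ Bx →
      (inner ℂ (act v g) (act w g) : ℂ) = (inner ℂ v w : ℂ))
    (htriv : ∀ (v : V), ∀ ε ∈ OF, act v ε = v)
    (hOFB : OF ≤ Bx) (hOFU : OF ≤ U)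
    (hcent : ∀ ε ∈ OF, ∀ g : G, ε * g = g * ε)
    (hfin : ∀ x y : G, (Gamma Bx U OF x y).Finite)
    (hwpos : ∀ x : G, 0 < weight Bx U OF x)
    (hcls : (classSet U Bx).Finite)
    (x y : G) (v w : V) :
    heightPairing Bx U OF (phiForm Bx U OF act x v) (phiForm Bx U OF act y w)
      = ∑ᶠ s ∈ Gamma Bx U OF x y, (inner ℂ (orbitVal act v s) w : ℂ) :=
  heightPairing_phiForm_phiForm_general Bx U OF act hmul hunit htriv hcent hfin x y v w
end

section
/- Let T_m be the Hecke operator on quaternionic modular forms given by T_m φ(x) = Σ_{h ∈ R̂^×\H_m} φ(hx), where H_m = {h ∈ R̂ : Ô_F·N(h) ∩ O_F = m}. Then for the forms with minimal support one has T_m φ_{x,v} = Σ_{h ∈ H_m/R̂^×} φ_{h⁻¹x, v}. The proof uses the two decompositions of Γ = (B^× ∩ x⁻¹H_m y)/O_F^× as the disjoint union over h ∈ R̂^×\H_m of Γ_{x,hy}, and as the disjoint union over h ∈ H_m/R̂^× of Γ_{h⁻¹x,y}. -/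
open scoped Classical

/- Abstract adelic framework: `G` plays the role of `B̂^×`, `Bx` the image of `B^×`,
`U` the compact open subgroup `R̂^×`, `Fh` the central subgroup `F̂^×`.  Then
`F^× = Bx ⊓ Fh`, `O_F^× = Bx ⊓ U` and `Ô_F^× = Fh ⊓ U`. -/

variable {G : Type*} [Group G]

/-- The right cosets `U\H` of a bi-`U`-invariant set `H` (e.g. `H_m`). -/
def rightCosets (U : Subgroup G) (H : Set G) : Set (Set G) :=
  {s | ∃ h ∈ H, s = {g | ∃ u ∈ U, g = u * h}}

/-- The left cosets `H/U`. -/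
def leftCosets (U : Subgroup G) (H : Set G) : Set (Set G) :=
  {s | ∃ h ∈ H, s = {g | ∃ u ∈ U, g = h * u}}

/-- The Hecke operator `T_m φ(x) = Σ_{h ∈ R̂^×\H_m} φ(hx)`. -/
noncomputable def hecke {V : Type*} [AddCommMonoid V]
    (U : Subgroup G) (H : Set G) (φ : G → V) (x : G) : V :=
  ∑ᶠ s ∈ rightCosets U H, if h : s.Nonempty then φ (h.some * x) else 0

/-! Both sides are sums of `v·γ` over `Γ = (B^× ∩ x⁻¹ H y)/O_F^×`. Splitting `H` into right cosets
`U h` cuts `Γ` into the pieces `Γ_{x,hy}`, splitting it into left cosets `h U` cuts it into the pieces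
`Γ_{h⁻¹x,y}`. The pieces are disjoint because `O_F^×` lies in `U` and is central, so two elements
`x⁻¹ g y` in the same `O_F^×`-orbit have `g` in the same coset. -/

section Cosets

variable {U : Subgroup G} {H : Set G}

theorem image_mul_right_eq_of_mem {g h : G} (hg : g ∈ (· * h) '' (U : Set G)) :
    (· * g) '' (U : Set G) = (· * h) '' (U : Set G) := by
  obtain ⟨u₀, hu₀, rfl⟩ := hg
  ext w
  constructor
  · rintro ⟨u, hu, rfl⟩
    exact ⟨u * u₀, U.mul_mem hu hu₀, by group⟩
  · rintro ⟨u, hu, rfl⟩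
    exact ⟨u * u₀⁻¹, U.mul_mem hu (U.inv_mem hu₀), by group⟩

theorem image_mul_left_eq_of_mem {g h : G} (hg : g ∈ (h * ·) '' (U : Set G)) :
    (g * ·) '' (U : Set G) = (h * ·) '' (U : Set G) := by
  obtain ⟨u₀, hu₀, rfl⟩ := hg
  ext w
  constructor
  · rintro ⟨u, hu, rfl⟩
    exact ⟨u₀ * u, U.mul_mem hu₀ hu, by group⟩
  · rintro ⟨u, hu, rfl⟩
    exact ⟨u₀⁻¹ * u, U.mul_mem (U.inv_mem hu₀) hu, by group⟩

theorem eq_image_mul_right_of_mem_rightCosets {s : Set G} (hs : s ∈ rightCosets U H) {c : G}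
    (hc : c ∈ s) : s = (· * c) '' (U : Set G) := by
  obtain ⟨h, -, rfl⟩ := hs
  have hs : {g | ∃ u ∈ U, g = u * h} = (· * h) '' (U : Set G) := by
    ext; exact ⟨fun ⟨u, hu, e⟩ => ⟨u, hu, e.symm⟩, fun ⟨u, hu, e⟩ => ⟨u, hu, e.symm⟩⟩
  rw [hs] at hc ⊢
  exact (image_mul_right_eq_of_mem hc).symm

theorem eq_image_mul_left_of_mem_leftCosets {s : Set G} (hs : s ∈ leftCosets U H) {c : G}
    (hc : c ∈ s) : s = (c * ·) '' (U : Set G) := by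
  obtain ⟨h, -, rfl⟩ := hs
  have hs : {g | ∃ u ∈ U, g = h * u} = (h * ·) '' (U : Set G) := by
    ext; exact ⟨fun ⟨u, hu, e⟩ => ⟨u, hu, e.symm⟩, fun ⟨u, hu, e⟩ => ⟨u, hu, e.symm⟩⟩
  rw [hs] at hc ⊢
  exact (image_mul_left_eq_of_mem hc).symm

theorem nonempty_of_mem_rightCosets {s : Set G} (hs : s ∈ rightCosets U H) : s.Nonempty := by
  obtain ⟨h, -, rfl⟩ := hs
  exact ⟨h, 1, U.one_mem, (one_mul h).symm⟩

theorem nonempty_of_mem_leftCosets {s : Set G} (hs : s ∈ leftCosets U H) : s.Nonempty := by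
  obtain ⟨h, -, rfl⟩ := hs
  exact ⟨h, 1, U.one_mem, (mul_one h).symm⟩

theorem rightCosets_pairwiseDisjoint : (rightCosets U H).PairwiseDisjoint id := by
  intro s₁ hs₁ s₂ hs₂ hne
  refine Set.disjoint_left.2 fun c hc₁ hc₂ => hne ?_
  rw [eq_image_mul_right_of_mem_rightCosets hs₁ hc₁, eq_image_mul_right_of_mem_rightCosets hs₂ hc₂]

theorem leftCosets_pairwiseDisjoint : (leftCosets U H).PairwiseDisjoint id := by
  intro s₁ hs₁ s₂ hs₂ hne
  refine Set.disjoint_left.2 fun c hc₁ hc₂ => hne ?_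
  rw [eq_image_mul_left_of_mem_leftCosets hs₁ hc₁, eq_image_mul_left_of_mem_leftCosets hs₂ hc₂]

theorem sUnion_rightCosets (hH : ∀ u ∈ U, ∀ h ∈ H, u * h ∈ H) : ⋃₀ rightCosets U H = H := by
  ext g
  constructor
  · rintro ⟨-, ⟨h, hh, rfl⟩, u, hu, rfl⟩
    exact hH u hu h hh
  · exact fun hg => ⟨_, ⟨g, hg, rfl⟩, 1, U.one_mem, (one_mul g).symm⟩

theorem sUnion_leftCosets (hH : ∀ u ∈ U, ∀ h ∈ H, h * u ∈ H) : ⋃₀ leftCosets U H = H := by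
  ext g
  constructor
  · rintro ⟨-, ⟨h, hh, rfl⟩, u, hu, rfl⟩
    exact hH u hu h hh
  · exact fun hg => ⟨_, ⟨g, hg, rfl⟩, 1, U.one_mem, (mul_one g).symm⟩

end Cosets

/-- `(B^× ∩ x⁻¹ S y)/O_F^×` for an arbitrary set `S ⊆ B̂^×`. -/
def GammaOver (Bx OF : Subgroup G) (x : G) (S : Set G) (y : G) : Set (Set G) :=
  leftOrbit OF '' ((Bx : Set G) ∩ (fun g => x⁻¹ * g * y) '' S)

section GammaOver

variable {Bx OF : Subgroup G} {x y : G}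

theorem Gamma_eq_GammaOver (U : Subgroup G) : Gamma Bx U OF x y = GammaOver Bx OF x U y := by
  ext t
  constructor
  · rintro ⟨γ, ⟨hγ, u, hu, rfl⟩, rfl⟩
    exact ⟨_, ⟨hγ, u, hu, rfl⟩, rfl⟩
  · rintro ⟨γ, ⟨hγ, u, hu, rfl⟩, rfl⟩
    exact ⟨_, ⟨hγ, u, hu, rfl⟩, rfl⟩

theorem GammaOver_image_mul_right (S : Set G) (c : G) :
    GammaOver Bx OF x ((· * c) '' S) y = GammaOver Bx OF x S (c * y) := by
  simp only [GammaOver, Set.image_image, mul_assoc]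

theorem GammaOver_image_mul_left (S : Set G) (c : G) :
    GammaOver Bx OF x ((c * ·) '' S) y = GammaOver Bx OF (c⁻¹ * x) S y := by
  simp only [GammaOver, Set.image_image, mul_inv_rev, inv_inv, mul_assoc]

theorem GammaOver_sUnion (𝒮 : Set (Set G)) :
    GammaOver Bx OF x (⋃₀ 𝒮) y = ⋃ s ∈ 𝒮, GammaOver Bx OF x s y := by
  simp only [GammaOver, Set.sUnion_eq_biUnion, Set.image_iUnion₂, Set.inter_iUnion₂]

theorem GammaOver_pairwiseDisjoint (hcent : ∀ ε ∈ OF, ∀ g : G, ε * g = g * ε)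
    {𝒮 : Set (Set G)} (h𝒮 : 𝒮.PairwiseDisjoint id) (hinv : ∀ s ∈ 𝒮, ∀ ε ∈ OF, ∀ g ∈ s, ε * g ∈ s) :
    𝒮.PairwiseDisjoint (GammaOver Bx OF x · y) := by
  intro s₁ hs₁ s₂ hs₂ hne
  refine Set.disjoint_left.2 ?_
  rintro - ⟨-, ⟨-, g₁, hg₁, rfl⟩, rfl⟩ ⟨-, ⟨-, g₂, hg₂, rfl⟩, horb⟩
  obtain ⟨ε, hε, hγ⟩ : x⁻¹ * g₂ * y ∈ leftOrbit OF (x⁻¹ * g₁ * y) :=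
    horb ▸ ⟨1, OF.one_mem, (one_mul _).symm⟩
  have hg : g₂ = ε * g₁ := by
    have : x⁻¹ * g₂ * y = x⁻¹ * (ε * g₁) * y := by
      rw [hγ, ← mul_assoc, ← mul_assoc, hcent ε hε x⁻¹, mul_assoc x⁻¹ ε g₁]
    exact mul_left_cancel (mul_right_cancel this)
  exact Set.disjoint_left.1 (h𝒮 hs₁ hs₂ hne) (hg ▸ hinv s₁ hs₁ ε hε g₁ hg₁) hg₂

theorem finsum_mem_GammaOver_sUnion {M : Type*} [AddCommMonoid M] (f : Set G → M)
    (hcent : ∀ ε ∈ OF, ∀ g : G, ε * g = g * ε) {𝒮 : Set (Set G)} (h𝒮fin : 𝒮.Finite)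
    (h𝒮 : 𝒮.PairwiseDisjoint id) (hinv : ∀ s ∈ 𝒮, ∀ ε ∈ OF, ∀ g ∈ s, ε * g ∈ s)
    (hfin : ∀ s ∈ 𝒮, (GammaOver Bx OF x s y).Finite) :
    ∑ᶠ t ∈ GammaOver Bx OF x (⋃₀ 𝒮) y, f t = ∑ᶠ s ∈ 𝒮, ∑ᶠ t ∈ GammaOver Bx OF x s y, f t := by
  rw [GammaOver_sUnion]
  exact finsum_mem_biUnion (GammaOver_pairwiseDisjoint hcent h𝒮 hinv) h𝒮fin hfin

end GammaOver

section Decompositions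

variable {V : Type*} [AddCommMonoid V] {Bx U OF : Subgroup G} {act : V → G → V} {H : Set G}

theorem hecke_phiForm_eq_finsum_GammaOver (hOFU : OF ≤ U)
    (hcent : ∀ ε ∈ OF, ∀ g : G, ε * g = g * ε) (hfin : ∀ x y : G, (Gamma Bx U OF x y).Finite)
    (hH : ∀ u ∈ U, ∀ h ∈ H, u * h ∈ H) (hHfin : (rightCosets U H).Finite) (x : G) (v : V) (y : G) :
    hecke U H (phiForm Bx U OF act x v) y = ∑ᶠ t ∈ GammaOver Bx OF x H y, orbitVal act v t := by
  have hpiece : ∀ s ∈ rightCosets U H, ∀ c ∈ s, Gamma Bx U OF x (c * y) = GammaOver Bx OF x s y :=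
    fun s hs c hc => by
      rw [eq_image_mul_right_of_mem_rightCosets hs hc, GammaOver_image_mul_right,
        Gamma_eq_GammaOver]
  have hinv : ∀ s ∈ rightCosets U H, ∀ ε ∈ OF, ∀ g ∈ s, ε * g ∈ s := fun s hs ε hε g hg => by
    rw [eq_image_mul_right_of_mem_rightCosets hs hg]
    exact ⟨ε, hOFU hε, rfl⟩
  have hfin' : ∀ s ∈ rightCosets U H, (GammaOver Bx OF x s y).Finite := fun s hs => by
    obtain ⟨c, hc⟩ := nonempty_of_mem_rightCosets hs
    exact hpiece s hs c hc ▸ hfin x (c * y)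
  have hsplit := finsum_mem_GammaOver_sUnion (orbitVal act v) hcent hHfin
    rightCosets_pairwiseDisjoint hinv hfin'
  rw [sUnion_rightCosets hH] at hsplit
  rw [hsplit, hecke]
  refine finsum_mem_congr rfl fun s hs => ?_
  have hne := nonempty_of_mem_rightCosets hs
  rw [dif_pos hne, phiForm, hpiece s hs _ hne.some_mem]

theorem finsum_leftCosets_phiForm_eq_finsum_GammaOver (hOFU : OF ≤ U)
    (hcent : ∀ ε ∈ OF, ∀ g : G, ε * g = g * ε) (hfin : ∀ x y : G, (Gamma Bx U OF x y).Finite)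
    (hH : ∀ u ∈ U, ∀ h ∈ H, h * u ∈ H) (hHfin : (leftCosets U H).Finite) (x : G) (v : V) (y : G) :
    ∑ᶠ s ∈ leftCosets U H,
        (if h : s.Nonempty then phiForm Bx U OF act (h.some⁻¹ * x) v y else 0)
      = ∑ᶠ t ∈ GammaOver Bx OF x H y, orbitVal act v t := by
  have hpiece : ∀ s ∈ leftCosets U H, ∀ c ∈ s, Gamma Bx U OF (c⁻¹ * x) y = GammaOver Bx OF x s y :=
    fun s hs c hc => by
      rw [eq_image_mul_left_of_mem_leftCosets hs hc, GammaOver_image_mul_left, Gamma_eq_GammaOver]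
  have hinv : ∀ s ∈ leftCosets U H, ∀ ε ∈ OF, ∀ g ∈ s, ε * g ∈ s := fun s hs ε hε g hg => by
    rw [eq_image_mul_left_of_mem_leftCosets hs hg, hcent ε hε g]
    exact ⟨ε, hOFU hε, rfl⟩
  have hfin' : ∀ s ∈ leftCosets U H, (GammaOver Bx OF x s y).Finite := fun s hs => by
    obtain ⟨c, hc⟩ := nonempty_of_mem_leftCosets hs
    exact hpiece s hs c hc ▸ hfin (c⁻¹ * x) y
  have hsplit := finsum_mem_GammaOver_sUnion (orbitVal act v) hcent hHfin
    leftCosets_pairwiseDisjoint hinv hfin'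
  rw [sUnion_leftCosets hH] at hsplit
  rw [hsplit]
  refine finsum_mem_congr rfl fun s hs => ?_
  have hne := nonempty_of_mem_leftCosets hs
  rw [dif_pos hne, phiForm, hpiece s hs _ hne.some_mem]

end Decompositions

theorem hecke_phiForm_general {V : Type*} [NormedAddCommGroup V]
    (Bx U OF : Subgroup G)
    (act : V → G → V)
    (hOFU : OF ≤ U)
    (hcent : ∀ ε ∈ OF, ∀ g : G, ε * g = g * ε)
    (hfin : ∀ x y : G, (Gamma Bx U OF x y).Finite)
    (H : Set G)
    (hH : ∀ u ∈ U, ∀ h ∈ H, u * h ∈ H ∧ h * u ∈ H)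
    (hHfin : (rightCosets U H).Finite ∧ (leftCosets U H).Finite)
    (x : G) (v : V) :
    ∀ y : G, hecke U H (phiForm Bx U OF act x v) y
      = ∑ᶠ s ∈ leftCosets U H,
          (if h : s.Nonempty then phiForm Bx U OF act (h.some⁻¹ * x) v y else 0) := by
  intro y
  rw [hecke_phiForm_eq_finsum_GammaOver hOFU hcent hfin (fun u hu h hh => (hH u hu h hh).1)
      hHfin.1 x v y,
    finsum_leftCosets_phiForm_eq_finsum_GammaOver hOFU hcent hfin
      (fun u hu h hh => (hH u hu h hh).2) hHfin.2 x v y]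

/-- `T_m φ_{x,v} = Σ_{h ∈ H_m/R̂^×} φ_{h⁻¹x, v}`. -/
theorem hecke_phiForm {V : Type*} [NormedAddCommGroup V] [InnerProductSpace ℂ V]
    (Bx U OF : Subgroup G)
    (act : V → G → V)
    (hone : ∀ v : V, act v 1 = v)
    (hmul : ∀ (v : V) (g h : G), act v (g * h) = act (act v g) h)
    (htriv : ∀ (v : V), ∀ ε ∈ OF, act v ε = v)
    (hOFB : OF ≤ Bx) (hOFU : OF ≤ U)
    (hcent : ∀ ε ∈ OF, ∀ g : G, ε * g = g * ε)
    (hfin : ∀ x y : G, (Gamma Bx U OF x y).Finite)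
    (H : Set G)
    (hH : ∀ u ∈ U, ∀ h ∈ H, u * h ∈ H ∧ h * u ∈ H)
    (hHfin : (rightCosets U H).Finite ∧ (leftCosets U H).Finite)
    (x : G) (v : V) :
    ∀ y : G, hecke U H (phiForm Bx U OF act x v) y
      = ∑ᶠ s ∈ leftCosets U H,
          (if h : s.Nonempty then phiForm Bx U OF act (h.some⁻¹ * x) v y else 0) :=
  hecke_phiForm_general Bx U OF act hOFU hcent hfin H hH hHfin x v
end

section
/- With the same local setup, assuming any two orders in B_p of the same discriminant containing O_{K_p} are conjugate by an element of K_p^× (Gross's local result), one has X_{D,p} = N(R_p)·K_p^×: every x with K_p ∩ x⁻¹R_p x = O_{K_p} factors as an element of the normalizer of R_p times an element of K_p^×. -/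
/-- The conjugate order `x⁻¹ R x = {c | x c x⁻¹ ∈ R}`. -/
def conjSubring {A : Type*} [Ring A] (x : Aˣ) (R : Subring A) : Subring A where
  carrier := {c | (x : A) * c * ((x⁻¹ : Aˣ) : A) ∈ R}
  zero_mem' := by simpa using R.zero_mem
  one_mem' := by simpa using R.one_mem
  add_mem' := by
    intro a b ha hb
    simpa [mul_add, add_mul] using R.add_mem ha hb
  neg_mem' := by
    intro a ha
    simpa [mul_neg, neg_mul] using R.neg_mem ha
  mul_mem' := by
    intro a b ha hb
    have h := R.mul_mem ha hb
    have key : ((x : A) * a * ((x⁻¹ : Aˣ) : A)) * ((x : A) * b * ((x⁻¹ : Aˣ) : A))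
        = (x : A) * (a * b) * ((x⁻¹ : Aˣ) : A) := by
      simp [mul_assoc, Units.inv_mul_cancel_left]
    rwa [key] at h

section conjSubring

variable {A : Type*} [Ring A]

@[simp]
theorem mem_conjSubring {x : Aˣ} {R : Subring A} {c : A} :
    c ∈ conjSubring x R ↔ (x : A) * c * ((x⁻¹ : Aˣ) : A) ∈ R :=
  Iff.rfl

theorem conjSubring_one (R : Subring A) : conjSubring 1 R = R := by
  ext c
  simp

theorem conjSubring_mul (x y : Aˣ) (R : Subring A) :
    conjSubring (x * y) R = conjSubring y (conjSubring x R) := by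
  ext c
  simp [mul_assoc]

theorem conjSubring_mul_inv_eq_self_of_conjSubring_eq {R : Subring A} {x a : Aˣ}
    (h : conjSubring a R = conjSubring x R) : conjSubring (x * a⁻¹) R = R := by
  rw [conjSubring_mul, ← h, ← conjSubring_mul, mul_inv_cancel, conjSubring_one]

end conjSubring

theorem special_points_eq_normalizer_mul_K_general
    {A ι : Type*} [Ring A]
    (Kp OKp Rp : Subring A)
    (disc : Subring A → ι)
    (hdisc : ∀ x : Aˣ, disc (conjSubring x Rp) = disc Rp)
    (hGross : ∀ Q : Subring A, OKp ≤ Q → disc Q = disc Rp →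
      ∃ a : Aˣ, (a : A) ∈ Kp ∧ ((a⁻¹ : Aˣ) : A) ∈ Kp ∧ conjSubring a Rp = Q)
    (x : Aˣ)
    (hx : Kp ⊓ conjSubring x Rp = OKp) :
    ∃ z a : Aˣ, conjSubring z Rp = Rp ∧ (a : A) ∈ Kp ∧ x = z * a := by
  -- `x⁻¹ R_p x` contains `O_{K_p}` (via `hx`) and has the discriminant of `R_p`, so Gross applies.
  obtain ⟨a, haK, -, ha⟩ := hGross _ (hx ▸ inf_le_right) (hdisc x)
  exact ⟨x * a⁻¹, a, conjSubring_mul_inv_eq_self_of_conjSubring_eq ha, haK, by simp⟩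

/-- `X_{D,p} = N(R_p)·K_p^×`: assuming Gross's local result that any
two orders of the same discriminant containing `O_{K_p}` are conjugate by an element
of `K_p^×`, every `x` with `K_p ∩ x⁻¹R_p x = O_{K_p}` factors as `x = z·a` with `z`
normalizing `R_p` and `a ∈ K_p^×`. -/
theorem special_points_eq_normalizer_mul_K
    {A ι : Type*} [Ring A]
    (Kp OKp Rp : Subring A) (hKO : OKp ≤ Kp) (hOR : OKp ≤ Rp)
    (disc : Subring A → ι)
    (hdisc : ∀ x : Aˣ, disc (conjSubring x Rp) = disc Rp)
    (hGross : ∀ Q : Subring A, OKp ≤ Q → disc Q = disc Rp →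
      ∃ a : Aˣ, (a : A) ∈ Kp ∧ ((a⁻¹ : Aˣ) : A) ∈ Kp ∧ conjSubring a Rp = Q)
    (x : Aˣ)
    (hx : Kp ⊓ conjSubring x Rp = OKp) :
    ∃ z a : Aˣ, conjSubring z Rp = Rp ∧ (a : A) ∈ Kp ∧ x = z * a :=
  special_points_eq_normalizer_mul_K_general Kp OKp Rp disc hdisc hGross x hx
end

section
/- Let R be an order in B with O_K ⊆ R, where K = F(√(-D)) and (-D, a) is the fundamental discriminant pair, and assume the relative discriminant D_K is coprime to the discriminant N of R and the local Eichler invariants of R are nonzero. Suppose: (i) cl(K) acts freely on the set of special points X_{D,a} = R̂^×\{x ∈ B̂^× : O_{D,a} ⊆ R_x}/K^×, (ii) Bil(R) acts transitively and freely on X_{D,a}/cl(K), and (iii) 1 ∈ X_{D,a}. Then η_D = Σ_{z ∈ Bil(R)} ψ_{P_D}·z, where η_D = (1/t_K)Σ_{x ∈ X_{D,a}} φ_{x,P_D} and ψ_{P_D} = (1/t_K)Σ_{a ∈ cl(K)} φ_{a,P_D}; consequently, for any quaternionic modular form φ fixed by Bil(R), ⟨φ, η_D⟩ = 2^{ω(N)}·⟨φ,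 ψ_{P_D}⟩. -/
/-!
The map `(z, a) ↦ z • a • x₀` is a bijection `Bil(R) × cl(K) ≃ X_{D,a}`: surjective and injective
in `z` by the transitivity and freeness of `Bil(R)` on `X_{D,a}/cl(K)`, injective in `a` by the
freeness of `cl(K)`. Summing over `X_{D,a}` along it (and reindexing `z ↦ z⁻¹`) writes `η_D` as the
sum of the translates `ψ_{P_D}·z`. Pairing with a `Bil(R)`-invariant form against a unitary action
gives every translate the same pairing as `ψ_{P_D}`, and there are `|Bil(R)| = 2^{ω(N)}` of them.
-/

open Finset

section SpecialPoints

variable {W CK X : Type*} [Group W] [Group CK] [MulAction W X] [MulAction CK X] {x₀ : X}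

theorem bijective_smul_smul_of_existsUnique (hfree : ∀ a : CK, a • x₀ = x₀ → a = 1)
    (huniq : ∀ x : X, ∃! z : W, ∃ a : CK, x = z • a • x₀) :
    Function.Bijective fun p : W × CK => p.1 • p.2 • x₀ := by
  refine ⟨?_, fun x => ?_⟩
  · rintro ⟨z, a⟩ ⟨z', a'⟩ h
    obtain rfl : z = z' := (huniq _).unique ⟨a, rfl⟩ ⟨a', h⟩
    have ha : a • x₀ = a' • x₀ := smul_left_cancel z h
    have : a'⁻¹ * a = 1 := hfree _ (by rw [mul_smul, ha, inv_smul_smul])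
    rw [inv_mul_eq_one.mp this]
  · obtain ⟨z, ⟨a, ha⟩, -⟩ := huniq x
    exact ⟨(z, a), ha.symm⟩

theorem sum_eq_sum_sum_smul_smul [Fintype W] [Fintype CK] [Fintype X] {A : Type*}
    [AddCommMonoid A] (hfree : ∀ a : CK, a • x₀ = x₀ → a = 1)
    (huniq : ∀ x : X, ∃! z : W, ∃ a : CK, x = z • a • x₀) (f : X → A) :
    ∑ x, f x = ∑ z : W, ∑ a : CK, f (z • a • x₀) := by
  rw [← (bijective_smul_smul_of_existsUnique hfree huniq).sum_comp f, Fintype.sum_prod_type]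

end SpecialPoints

theorem inner_sum_act_of_forall_act_eq {M W : Type*} [NormedAddCommGroup M]
    [InnerProductSpace ℂ M] [Fintype W] (actM : M → W → M)
    (hinv : ∀ (m n : M) (z : W), inner ℂ (actM m z) (actM n z) = inner ℂ m n)
    {φ : M} (hφ : ∀ z : W, actM φ z = φ) (v : M) :
    inner ℂ φ (∑ z, actM v z) = Fintype.card W • inner ℂ φ v := by
  calc inner ℂ φ (∑ z, actM v z) = ∑ z, inner ℂ (actM φ z) (actM v z) := by
        simp only [inner_sum, hφ]
    _ = Fintype.card W • inner ℂ φ v := by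
        simp only [hinv, sum_const, card_univ]

theorem eta_eq_sum_psi_and_pairing_general
    {M : Type*} [NormedAddCommGroup M] [InnerProductSpace ℂ M]
    (W CK X : Type*) [Group W] [Group CK]
    [Fintype W] [Fintype CK] [Fintype X]
    [MulAction W X] [MulAction CK X]
    (Φ : X → M) (x₀ : X)
    (actM : M → W → M)
    (hlin : ∀ z : W, IsLinearMap ℂ (fun m : M => actM m z))
    (hequiv : ∀ (x : X) (z : W), actM (Φ x) z = Φ (z⁻¹ • x))
    (hinv : ∀ (m n : M) (z : W), (inner ℂ (actM m z) (actM n z) : ℂ) = (inner ℂ m n : ℂ))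
    (hCKfree : ∀ (a : CK) (x : X), a • x = x → a = 1)
    (htransfree : ∀ x : X, ∃! z : W, ∃ a : CK, x = z • (a • x₀))
    (tK : ℕ)
    (ω : ℕ) (hW : Nat.card W = 2 ^ ω)
    (φ : M) (hφ : ∀ z : W, actM φ z = φ) :
    ((tK : ℂ)⁻¹ • ∑ x : X, Φ x)
        = ∑ z : W, actM ((tK : ℂ)⁻¹ • ∑ a : CK, Φ (a • x₀)) z ∧
      (inner ℂ φ ((tK : ℂ)⁻¹ • ∑ x : X, Φ x) : ℂ)
        = (2 ^ ω : ℂ) * (inner ℂ φ ((tK : ℂ)⁻¹ • ∑ a : CK, Φ (a • x₀)) : ℂ) := by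
  set c : ℂ := (tK : ℂ)⁻¹
  have hact (z : W) : actM (c • ∑ a : CK, Φ (a • x₀)) z = c • ∑ a : CK, Φ (z⁻¹ • a • x₀) :=
    calc actM (c • ∑ a : CK, Φ (a • x₀)) z = c • actM (∑ a : CK, Φ (a • x₀)) z :=
          (hlin z).map_smul _ _
      _ = c • ∑ a : CK, actM (Φ (a • x₀)) z := congrArg _ (map_sum (hlin z).mk' _ _)
      _ = c • ∑ a : CK, Φ (z⁻¹ • a • x₀) := by simp only [hequiv]
  have hη : c • ∑ x : X, Φ x = ∑ z : W, actM (c • ∑ a : CK, Φ (a • x₀)) z := by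
    rw [sum_eq_sum_sum_smul_smul (hCKfree · x₀) htransfree, ← Equiv.sum_comp (Equiv.inv W),
      smul_sum]
    simp only [hact, Equiv.inv_apply]
  refine ⟨hη, ?_⟩
  rw [hη, inner_sum_act_of_forall_act_eq actM hinv hφ, Fintype.card_eq_nat_card, hW, nsmul_eq_mul]
  push_cast
  rfl

/-- Abstract setting: `M` is the space of quaternionic modular forms
(an inner product space via the height pairing), `X` the finite set of special
points `X_{D,a}`, `Φ : X → M` the map `x ↦ φ_{x,P_D}`, `x₀` the base point `1 ∈ X`,
`CK = cl(K)` acting freely on `X`, and `W = Bil(R) ≅ (ℤ/2)^{ω(N)}` (so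
`|W| = 2^{ω(N)}`) acting on `X` on the left, commuting with the `CK`-action and
acting transitively and freely on `X/cl(K)` (hypothesis `htransfree`).  The right
action `actM` of `W` on `M` is unitary, linear and satisfies
`Φ(x)·z = Φ(z⁻¹•x)` (equation `φ_{x,v}·z = φ_{z⁻¹x,v}`).  With
`η_D = (1/t_K) Σ_{x ∈ X} Φ(x)` and `ψ = (1/t_K) Σ_{a ∈ cl(K)} Φ(a•x₀)`, the
conclusions are `η_D = Σ_{z ∈ W} ψ·z` and, for any form `φ` fixed by `W = Bil(R)`,
`⟨φ, η_D⟩ = 2^{ω(N)}·⟨φ, ψ⟩`. -/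
theorem eta_eq_sum_psi_and_pairing
    {M : Type*} [NormedAddCommGroup M] [InnerProductSpace ℂ M]
    (W CK X : Type*) [Group W] [Group CK]
    [Fintype W] [Fintype CK] [Fintype X]
    [MulAction W X] [MulAction CK X]
    (hcomm : ∀ (z : W) (a : CK) (x : X), z • (a • x) = a • (z • x))
    (Φ : X → M) (x₀ : X)
    (actM : M → W → M)
    (hlin : ∀ z : W, IsLinearMap ℂ (fun m : M => actM m z))
    (hone : ∀ m : M, actM m 1 = m)
    (hmulz : ∀ (m : M) (z z' : W), actM m (z * z') = actM (actM m z) z')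
    (hequiv : ∀ (x : X) (z : W), actM (Φ x) z = Φ (z⁻¹ • x))
    (hinv : ∀ (m n : M) (z : W), (inner ℂ (actM m z) (actM n z) : ℂ) = (inner ℂ m n : ℂ))
    (hCKfree : ∀ (a : CK) (x : X), a • x = x → a = 1)
    (htransfree : ∀ x : X, ∃! z : W, ∃ a : CK, x = z • (a • x₀))
    (tK : ℕ) (htK : 0 < tK)
    (ω : ℕ) (hW : Nat.card W = 2 ^ ω)
    (φ : M) (hφ : ∀ z : W, actM φ z = φ) :
    ((tK : ℂ)⁻¹ • ∑ x : X, Φ x)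
        = ∑ z : W, actM ((tK : ℂ)⁻¹ • ∑ a : CK, Φ (a • x₀)) z ∧
      (inner ℂ φ ((tK : ℂ)⁻¹ • ∑ x : X, Φ x) : ℂ)
        = (2 ^ ω : ℂ) * (inner ℂ φ ((tK : ℂ)⁻¹ • ∑ a : CK, Φ (a • x₀)) : ℂ) :=
  eta_eq_sum_psi_and_pairing_general W CK X Φ x₀ actM hlin hequiv hinv hCKfree htransfree tK ω hW φ
    hφ
end
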